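/- The CBC mode of operation is sensitive to initial conditions with sensitivity constant at least N: for every point P ∈ X and every δ > 0, there exist a point P' ∈ X with d(P, P') < δ and an integer n ∈ ℕ such that d(G_g^{∘n}(P), G_g^{∘n}(P')) > N. -/

import Mathlib

open scoped BigOperators

/-- N-bit blocks: Boolean vectors of length N. -/
abbrev Block (N : ℕ) := Fin N → Bool

/-- Infinite sequences of N-bit blocks. -/
abbrev Msg (N : ℕ) := ℕ → Block N

/-- The phase space X = B^N × S_N. -/
abbrev Phase (N : ℕ) := Block N × Msg N

/-- Hamming distance d_e on B^N. -/
noncomputable def dE {N : ℕ} (x y : Block N) : ℝ :=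
  ∑ j : Fin N, if x j = y j then (0 : ℝ) else 1

/-- Distance d_m on message sequences. -/
noncomputable def dM {N : ℕ} (m m' : Msg N) : ℝ :=
  (9 / (N : ℝ)) * ∑' k : ℕ, (∑ i : Fin N, if m k i = m' k i then (0 : ℝ) else 1) / 10 ^ (k + 1)

/-- The distance d on the phase space X. -/
noncomputable def dX {N : ℕ} (P Q : Phase N) : ℝ :=
  dE P.1 Q.1 + dM P.2 Q.2

/-- The shift on message sequences. -/
def shiftMsg {N : ℕ} (m : Msg N) : Msg N := fun k => m (k + 1)

/-- The dynamical system G_g(x, m) = (g(m^0, x), σ(m)). -/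
def Gg {N : ℕ} (g : Block N → Block N → Block N) (P : Phase N) : Phase N :=
  (g (P.2 0) P.1, shiftMsg P.2)

/-- The CBC iterate function g(m, x) = E_k(x ⊕ m), with ⊕ the bitwise XOR. -/
def cbcG {N : ℕ} (Ek : Block N → Block N) (m x : Block N) : Block N :=
  Ek (fun j => Bool.xor (x j) (m j))

/-!
The first `n` message blocks alone determine the first `n` states of an orbit, and changing
only the blocks from index `n` on moves a point by at most `10⁻ⁿ` in `d_m`. Since `E_k` is onto,
the block at index `n` can be chosen to send the state at time `n + 1` to the complement of the
unperturbed one, at Hamming distance `N`; complementing all later blocks as well makes the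
`d_m`-part of the distance positive, so the total distance at time `n + 1` exceeds `N`.
-/

section Hamming

variable {N : ℕ}

lemma dE_nonneg (x y : Block N) : 0 ≤ dE x y :=
  Finset.sum_nonneg fun _ _ => by split <;> norm_num

lemma dE_le (x y : Block N) : dE x y ≤ N := by
  calc dE x y ≤ ∑ _j : Fin N, (1 : ℝ) := Finset.sum_le_sum fun _ _ => by split <;> norm_num
    _ = N := by simp

lemma dE_pos_of_ne {x y : Block N} (h : x ≠ y) : 0 < dE x y := by
  obtain ⟨j, hj⟩ := Function.ne_iff.mp h
  exact Finset.sum_pos' (fun _ _ => by split <;> norm_num) ⟨j, Finset.mem_univ j, by simp [hj]⟩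

lemma dE_compl (x : Block N) : dE x xᶜ = N := by
  simp [dE, Pi.compl_apply]

end Hamming

section Messages

variable {N : ℕ}

lemma dM_eq (m m' : Msg N) : dM m m' = 9 / N * ∑' k, dE (m k) (m' k) / 10 ^ (k + 1) := rfl

lemma dE_div_pow_le (x y : Block N) (k : ℕ) : dE x y / 10 ^ (k + 1) ≤ N / 10 * (1 / 10) ^ k := by
  rw [one_div_pow, div_mul_div_comm, mul_one, ← pow_succ']
  gcongr
  exact dE_le x y

lemma summable_dE_div_pow (m m' : Msg N) : Summable fun k => dE (m k) (m' k) / 10 ^ (k + 1) :=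
  ((summable_geometric_of_lt_one (by norm_num) (by norm_num)).mul_left _).of_nonneg_of_le
    (fun k => div_nonneg (dE_nonneg _ _) (by positivity)) (fun k => dE_div_pow_le _ _ k)

lemma dM_le_of_eqOn {m m' : Msg N} {n : ℕ} (h : ∀ k < n, m k = m' k) :
    dM m m' ≤ (1 / 10) ^ n := by
  set f := fun k => dE (m k) (m' k) / 10 ^ (k + 1)
  have head : ∑ k ∈ Finset.range n, f k = 0 :=
    Finset.sum_eq_zero fun k hk => by simp [f, h k (Finset.mem_range.mp hk), dE]
  have tail : ∑' k, f (k + n) ≤ N / 9 * (1 / 10) ^ n := by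
    have hgeo := summable_geometric_of_lt_one (r := (1 / 10 : ℝ)) (by norm_num) (by norm_num)
    calc ∑' k, f (k + n) ≤ ∑' k, N / 10 * (1 / 10) ^ n * (1 / 10 : ℝ) ^ k :=
          ((summable_nat_add_iff n).mpr (summable_dE_div_pow m m')).tsum_le_tsum
            (fun k => (dE_div_pow_le _ _ _).trans_eq (by ring)) (hgeo.mul_left _)
      _ = N / 9 * (1 / 10) ^ n := by
          rw [tsum_mul_left, tsum_geometric_of_lt_one (by norm_num) (by norm_num)]
          ring
  rw [dM_eq, ← (summable_dE_div_pow m m').sum_add_tsum_nat_add n, head, zero_add]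
  calc 9 / (N : ℝ) * ∑' k, f (k + n) ≤ 9 / N * (N / 9 * (1 / 10) ^ n) := by gcongr
    _ ≤ (1 / 10) ^ n := by
      rcases eq_or_ne (N : ℝ) 0 with hN | hN
      · simp [hN]
      · rw [← mul_assoc, div_mul_div_cancel₀ hN]
        norm_num

lemma dM_pos_of_ne {m m' : Msg N} (h : m 0 ≠ m' 0) : 0 < dM m m' := by
  obtain ⟨j, -⟩ := Function.ne_iff.mp h
  have hN : (0 : ℝ) < N := by exact_mod_cast j.pos
  exact mul_pos (by positivity) ((summable_dE_div_pow m m').tsum_pos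
    (fun k => div_nonneg (dE_nonneg _ _) (by positivity)) 0 (div_pos (dE_pos_of_ne h) (by positivity)))

end Messages

section Dynamics

variable {N : ℕ} (g : Block N → Block N → Block N)

lemma Gg_iterate_snd (n : ℕ) (P : Phase N) : ((Gg g)^[n] P).2 = fun k => P.2 (k + n) := by
  induction n generalizing P with
  | zero => rfl
  | succ n ih =>
    rw [Function.iterate_succ_apply, ih]
    funext k
    simp only [Gg, shiftMsg, Nat.add_assoc]

lemma Gg_iterate_succ_fst (n : ℕ) (P : Phase N) :
    ((Gg g)^[n + 1] P).1 = g (P.2 n) ((Gg g)^[n] P).1 := by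
  rw [Function.iterate_succ_apply', Gg, Gg_iterate_snd]
  simp only [Nat.zero_add]

lemma Gg_iterate_fst_congr {n : ℕ} (x : Block N) {m m' : Msg N} (h : ∀ k < n, m k = m' k) :
    ((Gg g)^[n] (x, m)).1 = ((Gg g)^[n] (x, m')).1 := by
  induction n with
  | zero => rfl
  | succ n ih =>
    rw [Gg_iterate_succ_fst, Gg_iterate_succ_fst, ih fun k hk => h k (by omega)]
    exact congrArg (g · _) (h n n.lt_succ_self)

end Dynamics

lemma exists_cbcG_eq {N : ℕ} {Ek : Block N → Block N} (hEk : Function.Surjective Ek)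
    (x y : Block N) : ∃ b, cbcG Ek b x = y := by
  obtain ⟨u, rfl⟩ := hEk y
  refine ⟨fun j => xor (x j) (u j), congrArg Ek (funext fun j => ?_)⟩
  simp

/-- the CBC mode of operation is sensitive to initial conditions with
sensitivity constant at least N. -/
theorem cbc_sensitive
    {N : ℕ} (hN : 1 ≤ N) (Ek : Block N → Block N) (hEk : Function.Bijective Ek) :
    ∀ (P : Phase N) (δ : ℝ), 0 < δ →
      ∃ (P' : Phase N) (n : ℕ), dX P P' < δ ∧
        dX ((Gg (cbcG Ek))^[n] P) ((Gg (cbcG Ek))^[n] P') > (N : ℝ) := by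
  rintro ⟨x, m⟩ δ hδ
  obtain ⟨n, hn⟩ := exists_pow_lt_of_lt_one hδ (by norm_num : (1 / 10 : ℝ) < 1)
  set G := Gg (cbcG Ek)
  obtain ⟨b, hb⟩ := exists_cbcG_eq hEk.2 (G^[n] (x, m)).1 (G^[n + 1] (x, m)).1ᶜ
  let m' : Msg N := fun k => if k < n then m k else if k = n then b else (m k)ᶜ
  have agree : ∀ k < n, m k = m' k := fun k hk => (if_pos hk).symm
  refine ⟨(x, m'), n + 1, ?_, ?_⟩
  · calc dX (x, m) (x, m') = dM m m' := by simp [dX, dE]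
      _ ≤ (1 / 10) ^ n := dM_le_of_eqOn agree
      _ < δ := hn
  · have fst : (G^[n + 1] (x, m')).1 = (G^[n + 1] (x, m)).1ᶜ := by
      rw [Gg_iterate_succ_fst, ← Gg_iterate_fst_congr _ x agree]
      simpa [m'] using hb
    have snd : (G^[n + 1] (x, m')).2 = fun k => ((G^[n + 1] (x, m)).2 k)ᶜ := by
      rw [Gg_iterate_snd, Gg_iterate_snd]
      funext k
      simp [m', show ¬k + (n + 1) < n by omega, show k + (n + 1) ≠ n by omega]
    have : Nonempty (Fin N) := ⟨⟨0, hN⟩⟩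
    rw [gt_iff_lt, dX, fst, snd, dE_compl]
    exact lt_add_of_pos_right _ (dM_pos_of_ne ne_compl_self)
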